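/- Every core compact sober space is locally compact, i.e. every point has a neighbourhood base of compact sets. -/

import Mathlib

/-- The way-below relation on subsets of a topological space:
every open cover of `q` has a finite subcover of `p`. -/
def WayBelow {X : Type*} [TopologicalSpace X] (p q : Set X) : Prop :=
  ∀ C : Set (Set X), (∀ U ∈ C, IsOpen U) → q ⊆ ⋃₀ C →
    ∃ F ⊆ C, F.Finite ∧ p ⊆ ⋃₀ F

/-- Core compactness. -/
def CoreCompact (X : Type*) [TopologicalSpace X] : Prop :=
  ∀ (x : X) (U : Set X), IsOpen U → x ∈ U → ∃ V, IsOpen V ∧ x ∈ V ∧ WayBelow V U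

/-- A `∪`-basis: a basis containing `∅` and closed under pairwise unions. -/
def IsUnionBasis {X : Type*} [TopologicalSpace X] (B : Set (Set X)) : Prop :=
  TopologicalSpace.IsTopologicalBasis B ∧ ∅ ∈ B ∧ ∀ p ∈ B, ∀ q ∈ B, p ∪ q ∈ B


/-!
Given `x ∈ U` open, core compactness gives `x ∈ V ≪ U`, and interpolating repeatedly yields a
chain `V ⊆ ⋯ ≪ W₂ ≪ W₁ ≪ W₀ = U` of open sets; `K = ⋂ Wₙ` is then a neighbourhood of `x`
inside `U`. It is compact once every open `O ⊇ K` contains some `Wₙ`. If not, Zorn's lemma gives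
a minimal closed set `F ⊆ Oᶜ` meeting every `Wₙ` (intersections of chains still meet every `Wₙ`
because `Wₙ₊₁ ≪ Wₙ`); minimality makes `F` irreducible, and its generic point lies in every
`Wₙ`, hence in `K ⊆ O`, a contradiction.
-/

open Set

section

variable {X : Type*} [TopologicalSpace X]

namespace WayBelow

variable {p q : Set X}

theorem subset (hq : IsOpen q) (h : WayBelow p q) : p ⊆ q := by
  obtain ⟨F, hF, -, hpF⟩ := h {q} (by simpa using hq) (by simp)
  exact hpF.trans (sUnion_subset fun A hA => (hF hA).le)

theorem mono {p' q' : Set X} (hp : p' ⊆ p) (hq : q ⊆ q') (h : WayBelow p q) :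
    WayBelow p' q' := fun C hC hcov =>
  let ⟨F, hFC, hFfin, hpF⟩ := h C hC (hq.trans hcov)
  ⟨F, hFC, hFfin, hp.trans hpF⟩

theorem biUnion {ι : Type*} {s : Set ι} (hs : s.Finite) {p : ι → Set X}
    (h : ∀ i ∈ s, WayBelow (p i) q) : WayBelow (⋃ i ∈ s, p i) q := by
  intro C hC hcov
  choose! F hFC hFfin hpF using fun i hi => h i hi C hC hcov
  refine ⟨⋃ i ∈ s, F i, iUnion₂_subset hFC, hs.biUnion hFfin, ?_⟩
  simp only [sUnion_iUnion]
  exact biUnion_mono subset_rfl hpF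

theorem exists_mem_of_directedOn (h : WayBelow p q) {D : Set (Set X)} (hne : D.Nonempty)
    (hdir : DirectedOn (· ⊆ ·) D) (hD : ∀ U ∈ D, IsOpen U) (hcov : q ⊆ ⋃₀ D) :
    ∃ U ∈ D, p ⊆ U := by
  obtain ⟨F, hFD, hFfin, hpF⟩ := h D hD hcov
  obtain ⟨U, hUD, hFU⟩ := Finset.sup_le_of_le_directed D hne hdir hFfin.toFinset
    fun A hA => ⟨A, hFD (hFfin.mem_toFinset.1 hA), le_rfl⟩
  rw [Finset.sup_id_set_eq_sUnion, hFfin.coe_toFinset] at hFU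
  exact ⟨U, hUD, hpF.trans hFU⟩

theorem sInter_inter_nonempty (h : WayBelow p q) {c : Set (Set X)} (hne : c.Nonempty)
    (hchain : IsChain (· ⊆ ·) c) (hc : ∀ F ∈ c, IsClosed F)
    (hmeet : ∀ F ∈ c, (F ∩ p).Nonempty) : (⋂₀ c ∩ q).Nonempty := by
  by_contra hempty
  have hcov : q ⊆ ⋃₀ (compl '' c) := by
    rw [← compl_sInter]
    exact fun x hxq hxc => hempty ⟨x, hxc, hxq⟩
  have hdir : DirectedOn (· ⊆ ·) (compl '' c) :=
    (hchain.symm.image_of_map_rel _ _ compl fun _ _ => compl_subset_compl.2).directedOn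
  obtain ⟨_, ⟨F, hF, rfl⟩, hpF⟩ := h.exists_mem_of_directedOn (hne.image _) hdir
    (forall_mem_image.2 fun F hF => (hc F hF).isOpen_compl) hcov
  obtain ⟨x, hxF, hxp⟩ := hmeet F hF
  exact hpF hxp hxF

end WayBelow

theorem isCompact_of_wayBelow_self {K : Set X} (h : WayBelow K K) : IsCompact K :=
  isCompact_generateFrom (TopologicalSpace.generateFrom_setOfPred_isOpen _).symm h

theorem CoreCompact.exists_wayBelow_wayBelow (hcc : CoreCompact X) {V W : Set X}
    (hW : IsOpen W) (h : WayBelow V W) : ∃ W', IsOpen W' ∧ WayBelow V W' ∧ WayBelow W' W := by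
  set C := {A : Set X | IsOpen A ∧ ∃ B, IsOpen B ∧ WayBelow A B ∧ WayBelow B W}
  have hcov : W ⊆ ⋃₀ C := fun y hy => by
    obtain ⟨B, hB, hyB, hBW⟩ := hcc y W hW hy
    obtain ⟨A, hA, hyA, hAB⟩ := hcc y B hB hyB
    exact ⟨A, ⟨hA, B, hB, hAB, hBW⟩, hyA⟩
  obtain ⟨F, hFC, hFfin, hVF⟩ := h C (fun A hA => hA.1) hcov
  have hFB : ∀ A ∈ F, ∃ B, IsOpen B ∧ WayBelow A B ∧ WayBelow B W := fun A hA => (hFC hA).2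
  choose! B hB hAB hBW using hFB
  refine ⟨⋃ A ∈ F, B A, isOpen_biUnion hB, ?_, WayBelow.biUnion hFfin hBW⟩
  rw [sUnion_eq_biUnion] at hVF
  exact (WayBelow.biUnion hFfin fun A hA =>
    (hAB A hA).mono subset_rfl (subset_biUnion_of_mem hA)).mono hVF subset_rfl

theorem CoreCompact.exists_wayBelow_seq (hcc : CoreCompact X) {V U : Set X} (hU : IsOpen U)
    (hVU : WayBelow V U) :
    ∃ W : ℕ → Set X, W 0 = U ∧ (∀ n, IsOpen (W n)) ∧ (∀ n, WayBelow V (W n)) ∧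
      ∀ n, WayBelow (W (n + 1)) (W n) := by
  have step (W : {W : Set X // IsOpen W ∧ WayBelow V W}) :
      ∃ W' : {W : Set X // IsOpen W ∧ WayBelow V W}, WayBelow W'.1 W.1 := by
    obtain ⟨W', hW', hVW', hW'W⟩ := hcc.exists_wayBelow_wayBelow W.2.1 W.2.2
    exact ⟨⟨W', hW', hVW'⟩, hW'W⟩
  choose next hnext using step
  refine ⟨fun n => (next^[n] ⟨U, hU, hVU⟩).1, rfl, fun n => (next^[n] _).2.1,
    fun n => (next^[n] _).2.2, fun n => ?_⟩
  simp only [Function.iterate_succ_apply']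
  exact hnext _

section WayBelowChain

variable {W : ℕ → Set X}

theorem exists_minimal_isClosed_inter_nonempty (hwb : ∀ n, WayBelow (W (n + 1)) (W n))
    {Z : Set X} (hZ : IsClosed Z) (hZW : ∀ n, (Z ∩ W n).Nonempty) :
    ∃ F ⊆ Z, Minimal (fun F => IsClosed F ∧ ∀ n, (F ∩ W n).Nonempty) F := by
  refine zorn_superset_nonempty {F | IsClosed F ∧ ∀ n, (F ∩ W n).Nonempty}
    (fun c hcS hchain hne => ?_) Z ⟨hZ, hZW⟩
  refine ⟨⋂₀ c, ⟨isClosed_sInter fun F hF => (hcS hF).1, fun n => ?_⟩,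
    fun F hF => sInter_subset_of_mem hF⟩
  exact (hwb n).sInter_inter_nonempty hne hchain (fun F hF => (hcS hF).1)
    fun F hF => (hcS hF).2 (n + 1)

theorem isIrreducible_of_minimal_isClosed_inter_nonempty (hW : Antitone W) {F : Set X}
    (hF : Minimal (fun F => IsClosed F ∧ ∀ n, (F ∩ W n).Nonempty) F) : IsIrreducible F := by
  refine ⟨(hF.1.2 0).mono inter_subset_left,
    isPreirreducible_iff_isClosed_union_isClosed.2 fun z₁ z₂ hz₁ hz₂ hsub => ?_⟩
  have escape (z : Set X) (hz : IsClosed z) (hFz : ¬F ⊆ z) : ∃ n, ¬(F ∩ z ∩ W n).Nonempty := by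
    by_contra! hmeet
    exact hFz ((hF.2 ⟨hF.1.1.inter hz, hmeet⟩ inter_subset_left).trans inter_subset_right)
  by_contra! hnot
  obtain ⟨n₁, hn₁⟩ := escape z₁ hz₁ hnot.1
  obtain ⟨n₂, hn₂⟩ := escape z₂ hz₂ hnot.2
  obtain ⟨x, hxF, hxW⟩ := hF.1.2 (max n₁ n₂)
  rcases hsub hxF with hx | hx
  · exact hn₁ ⟨x, ⟨hxF, hx⟩, hW (le_max_left _ _) hxW⟩
  · exact hn₂ ⟨x, ⟨hxF, hx⟩, hW (le_max_right _ _) hxW⟩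

variable [QuasiSober X]

theorem exists_subset_of_iInter_subset (hW : ∀ n, IsOpen (W n))
    (hwb : ∀ n, WayBelow (W (n + 1)) (W n)) {O : Set X} (hO : IsOpen O) (hWO : ⋂ n, W n ⊆ O) :
    ∃ n, W n ⊆ O := by
  by_contra! hnot
  obtain ⟨F, hFO, hF⟩ := exists_minimal_isClosed_inter_nonempty hwb hO.isClosed_compl
    fun n => (not_subset.1 (hnot n)).imp fun _ hx => ⟨hx.2, hx.1⟩
  have hanti : Antitone W := antitone_nat_of_succ_le fun n => (hwb n).subset (hW n)
  obtain ⟨x, hx⟩ := QuasiSober.sober (isIrreducible_of_minimal_isClosed_inter_nonempty hanti hF)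
    hF.1.1
  have hxW : x ∈ ⋂ n, W n := mem_iInter.2 fun n => (hx.mem_open_set_iff (hW n)).2 (hF.1.2 n)
  exact hFO hx.mem (hWO hxW)

theorem isCompact_iInter_of_wayBelow (hW : ∀ n, IsOpen (W n))
    (hwb : ∀ n, WayBelow (W (n + 1)) (W n)) : IsCompact (⋂ n, W n) := by
  refine isCompact_of_wayBelow_self fun C hC hcov => ?_
  obtain ⟨n, hn⟩ := exists_subset_of_iInter_subset hW hwb (isOpen_sUnion hC) hcov
  obtain ⟨F, hFC, hFfin, hF⟩ := hwb n C hC hn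
  exact ⟨F, hFC, hFfin, (iInter_subset W (n + 1)).trans hF⟩

end WayBelowChain

end

theorem stmt12_general {X : Type*} [TopologicalSpace X] [QuasiSober X]
    (hcc : CoreCompact X) : LocallyCompactSpace X := by
  refine ⟨fun x n hn => ?_⟩
  obtain ⟨U, hUn, hU, hxU⟩ := mem_nhds_iff.1 hn
  obtain ⟨V, hV, hxV, hVU⟩ := hcc x U hU hxU
  obtain ⟨W, rfl, hW, hVW, hwb⟩ := hcc.exists_wayBelow_seq hU hVU
  have hVK : V ⊆ ⋂ n, W n := subset_iInter fun n => (hVW n).subset (hW n)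
  exact ⟨⋂ n, W n, mem_nhds_iff.2 ⟨V, hVK, hV, hxV⟩, (iInter_subset W 0).trans hUn,
    isCompact_iInter_of_wayBelow hW hwb⟩

theorem stmt12 {X : Type*} [TopologicalSpace X] [QuasiSober X] [T0Space X]
    (hcc : CoreCompact X) : LocallyCompactSpace X :=
  stmt12_general hcc
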